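/- Under the hypotheses that k: [0,1]² → ℝ is continuous, f is continuous on 𝒟_M with |f| ≤ M there, f is Lipschitz in (u,v,z) with constants L_0, L_1, L_2 on 𝒟_M, and q = L_0·(5/384) + L_1·(1/24) + L_2·(5/384)·M_2 < 1, the boundary value problem u''''(x) = f(x, u(x), u'(x), ∫₀¹ k(x,t)u(t)dt) on (0,1) with u(0)=u(1)=u''(0)=u''(1)=0 has a unique solution u ∈ C⁴[0,1], and this solution satisfies |u(x)| ≤ (5/384)·M and |u'(x)| ≤ (1/24)·M for all x ∈ [0,1]. -/

import Mathlib

open Set intervalIntegral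

noncomputable def Gop (g : ℝ → ℝ) : ℝ → ℝ := fun x =>
  x * (∫ s in (0:ℝ)..x, g s) - (∫ s in (0:ℝ)..x, s * g s)
    - x * (∫ s in (0:ℝ)..1, (1-s) * g s)

noncomputable def Gop' (g : ℝ → ℝ) : ℝ → ℝ := fun x =>
  (∫ s in (0:ℝ)..x, g s) - (∫ s in (0:ℝ)..1, (1-s) * g s)

lemma hasDerivAt_Gop {g : ℝ → ℝ} (hg : Continuous g) (x : ℝ) :
    HasDerivAt (Gop g) (Gop' g x) x := by
  have h1 : HasDerivAt (fun y => ∫ s in (0:ℝ)..y, g s) (g x) x :=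
    integral_hasDerivAt_right (hg.intervalIntegrable _ _)
      (hg.stronglyMeasurableAtFilter _ _) hg.continuousAt
  have h2 : HasDerivAt (fun y => ∫ s in (0:ℝ)..y, s * g s) (x * g x) x :=
    integral_hasDerivAt_right ((continuous_id.mul hg).intervalIntegrable _ _)
      ((continuous_id.mul hg).stronglyMeasurableAtFilter _ _)
      (continuous_id.mul hg).continuousAt
  have h3 := (((hasDerivAt_id x).mul h1).sub h2).sub
    ((hasDerivAt_id x).mul_const (∫ s in (0:ℝ)..1, (1-s) * g s))
  convert h3 using 1
  · rfl
  · rfl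
  · rfl
  · simp [Gop']

lemma hasDerivAt_Gop' {g : ℝ → ℝ} (hg : Continuous g) (x : ℝ) :
    HasDerivAt (Gop' g) (g x) x := by
  have h1 : HasDerivAt (fun y => ∫ s in (0:ℝ)..y, g s) (g x) x :=
    integral_hasDerivAt_right (hg.intervalIntegrable _ _)
      (hg.stronglyMeasurableAtFilter _ _) hg.continuousAt
  exact h1.sub_const _

lemma Gop_zero {g : ℝ → ℝ} : Gop g 0 = 0 := by simp [Gop]

lemma integral_one_sub_mul {g : ℝ → ℝ} (hg : Continuous g) :
    (∫ s in (0:ℝ)..1, (1-s) * g s) = (∫ s in (0:ℝ)..1, g s) - ∫ s in (0:ℝ)..1, s * g s := by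
  have h2 : (∫ s in (0:ℝ)..1, (1-s) * g s) = ∫ s in (0:ℝ)..1, (g s - s * g s) := by
    apply intervalIntegral.integral_congr; intro s _; ring
  rw [h2, intervalIntegral.integral_sub (hg.intervalIntegrable _ _)
    (Continuous.intervalIntegrable (by continuity) _ _)]

lemma Gop_one {g : ℝ → ℝ} (hg : Continuous g) : Gop g 1 = 0 := by
  simp only [Gop, one_mul, integral_one_sub_mul hg]; ring

lemma continuous_Gop {g : ℝ → ℝ} (hg : Continuous g) : Continuous (Gop g) := by
  have : Differentiable ℝ (Gop g) := fun x => (hasDerivAt_Gop hg x).differentiableAt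
  exact this.continuous

lemma continuous_Gop' {g : ℝ → ℝ} (hg : Continuous g) : Continuous (Gop' g) := by
  have : Differentiable ℝ (Gop' g) := fun x => (hasDerivAt_Gop' hg x).differentiableAt
  exact this.continuous

lemma deriv_Gop {g : ℝ → ℝ} (hg : Continuous g) : deriv (Gop g) = Gop' g :=
  funext fun x => (hasDerivAt_Gop hg x).deriv

lemma deriv_Gop' {g : ℝ → ℝ} (hg : Continuous g) : deriv (Gop' g) = g :=
  funext fun x => (hasDerivAt_Gop' hg x).deriv

/-- `Gop (Gop g)` is `C⁴`. -/
lemma contDiff_GopGop {g : ℝ → ℝ} (hg : Continuous g) :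
    ContDiff ℝ 4 (Gop (Gop g)) := by
  have w_cont := continuous_Gop hg
  have : ContDiff ℝ 0 g := contDiff_zero.2 hg
  have c1 : ContDiff ℝ 1 (Gop' g) := by
    rw [show (1:WithTop ℕ∞) = 0 + 1 by norm_num, contDiff_succ_iff_deriv]
    refine ⟨fun x => (hasDerivAt_Gop' hg x).differentiableAt, by simp, ?_⟩
    rw [deriv_Gop' hg]; exact this
  have c2 : ContDiff ℝ 2 (Gop g) := by
    rw [show (2:WithTop ℕ∞) = 1 + 1 by norm_num, contDiff_succ_iff_deriv]
    refine ⟨fun x => (hasDerivAt_Gop hg x).differentiableAt, by simp, ?_⟩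
    rw [deriv_Gop hg]; exact c1
  have c3 : ContDiff ℝ 3 (Gop' (Gop g)) := by
    rw [show (3:WithTop ℕ∞) = 2 + 1 by norm_num, contDiff_succ_iff_deriv]
    refine ⟨fun x => (hasDerivAt_Gop' w_cont x).differentiableAt, by simp, ?_⟩
    rw [deriv_Gop' w_cont]; exact c2
  rw [show (4:WithTop ℕ∞) = 3 + 1 by norm_num, contDiff_succ_iff_deriv]
  refine ⟨fun x => (hasDerivAt_Gop w_cont x).differentiableAt, by simp, ?_⟩
  rw [deriv_Gop w_cont]; exact c3


lemma integral_cubic (a b c0 c1 c2 c3 : ℝ) :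
    ∫ s in a..b, (c0 + c1*s + c2*s^2 + c3*s^3)
      = c0*(b-a) + c1*(b^2-a^2)/2 + c2*(b^3-a^3)/3 + c3*(b^4-a^4)/4 := by
  have i0 : IntervalIntegrable (fun _ : ℝ => c0) MeasureTheory.volume a b :=
    Continuous.intervalIntegrable (by continuity) _ _
  have i1 : IntervalIntegrable (fun s : ℝ => c1*s) MeasureTheory.volume a b :=
    Continuous.intervalIntegrable (by continuity) _ _
  have i2 : IntervalIntegrable (fun s : ℝ => c2*s^2) MeasureTheory.volume a b :=
    Continuous.intervalIntegrable (by continuity) _ _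
  have i3 : IntervalIntegrable (fun s : ℝ => c3*s^3) MeasureTheory.volume a b :=
    Continuous.intervalIntegrable (by continuity) _ _
  rw [intervalIntegral.integral_add ((i0.add i1).add i2) i3,
    intervalIntegral.integral_add (i0.add i1) i2,
    intervalIntegral.integral_add i0 i1,
    intervalIntegral.integral_const_mul, intervalIntegral.integral_const_mul,
    intervalIntegral.integral_const_mul]
  simp [integral_pow]
  ring

/-- Green-kernel representation of `Gop`. -/
lemma Gop_rep {g : ℝ → ℝ} (hg : Continuous g) (x : ℝ) :
    Gop g x = -((∫ s in (0:ℝ)..x, s*(1-x)*g s) + ∫ s in x..(1:ℝ), x*(1-s)*g s) := by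
  have hgi : ∀ a b : ℝ, IntervalIntegrable g MeasureTheory.volume a b :=
    fun a b => hg.intervalIntegrable _ _
  have hsgi : ∀ a b : ℝ, IntervalIntegrable (fun s => s * g s) MeasureTheory.volume a b :=
    fun a b => Continuous.intervalIntegrable (by continuity) _ _
  have e1 : (∫ s in (0:ℝ)..x, s*(1-x)*g s) = (1-x) * ∫ s in (0:ℝ)..x, s * g s := by
    rw [← intervalIntegral.integral_const_mul]
    apply intervalIntegral.integral_congr; intro s _; ring
  have e2 : (∫ s in x..(1:ℝ), x*(1-s)*g s)
      = x * ((∫ s in x..(1:ℝ), g s) - ∫ s in x..(1:ℝ), s * g s) := by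
    rw [← intervalIntegral.integral_sub (hgi _ _) (hsgi _ _),
      ← intervalIntegral.integral_const_mul]
    apply intervalIntegral.integral_congr; intro s _; ring
  have e3 : (∫ s in x..(1:ℝ), g s) = (∫ s in (0:ℝ)..1, g s) - ∫ s in (0:ℝ)..x, g s := by
    rw [← intervalIntegral.integral_add_adjacent_intervals (hgi 0 x) (hgi x 1)]; ring
  have e4 : (∫ s in x..(1:ℝ), s * g s)
      = (∫ s in (0:ℝ)..1, s * g s) - ∫ s in (0:ℝ)..x, s * g s := by
    rw [← intervalIntegral.integral_add_adjacent_intervals (hsgi 0 x) (hsgi x 1)]; ring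
  have e5 : (∫ s in (0:ℝ)..1, (1-s) * g s)
      = (∫ s in (0:ℝ)..1, g s) - ∫ s in (0:ℝ)..1, s * g s := by
    have h2 : (∫ s in (0:ℝ)..1, (1-s) * g s) = ∫ s in (0:ℝ)..1, (g s - s * g s) := by
      apply intervalIntegral.integral_congr; intro s _; ring
    rw [h2, intervalIntegral.integral_sub (hgi _ _) (hsgi _ _)]
  simp only [Gop, e1, e2, e3, e4, e5]; ring

/-- Similar representation of `Gop'`. -/
lemma Gop'_rep {g : ℝ → ℝ} (hg : Continuous g) (x : ℝ) :
    Gop' g x = (∫ s in (0:ℝ)..x, s*g s) - ∫ s in x..(1:ℝ), (1-s)*g s := by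
  have hgi : ∀ a b : ℝ, IntervalIntegrable g MeasureTheory.volume a b :=
    fun a b => hg.intervalIntegrable _ _
  have hsgi : ∀ a b : ℝ, IntervalIntegrable (fun s => s * g s) MeasureTheory.volume a b :=
    fun a b => Continuous.intervalIntegrable (by continuity) _ _
  have e2 : (∫ s in x..(1:ℝ), (1-s)*g s)
      = (∫ s in x..(1:ℝ), g s) - ∫ s in x..(1:ℝ), s * g s := by
    rw [← intervalIntegral.integral_sub (hgi _ _) (hsgi _ _)]
    apply intervalIntegral.integral_congr; intro s _; ring
  have e3 : (∫ s in x..(1:ℝ), g s) = (∫ s in (0:ℝ)..1, g s) - ∫ s in (0:ℝ)..x, g s := by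
    rw [← intervalIntegral.integral_add_adjacent_intervals (hgi 0 x) (hgi x 1)]; ring
  have e4 : (∫ s in x..(1:ℝ), s * g s)
      = (∫ s in (0:ℝ)..1, s * g s) - ∫ s in (0:ℝ)..x, s * g s := by
    rw [← intervalIntegral.integral_add_adjacent_intervals (hsgi 0 x) (hsgi x 1)]; ring
  have e5 : (∫ s in (0:ℝ)..1, (1-s) * g s)
      = (∫ s in (0:ℝ)..1, g s) - ∫ s in (0:ℝ)..1, s * g s := by
    have h2 : (∫ s in (0:ℝ)..1, (1-s) * g s) = ∫ s in (0:ℝ)..1, (g s - s * g s) := by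
      apply intervalIntegral.integral_congr; intro s _; ring
    rw [h2, intervalIntegral.integral_sub (hgi _ _) (hsgi _ _)]
  simp only [Gop', e2, e3, e4, e5]; ring

/-- Generic bound for `Gop`. -/
lemma abs_Gop_le {g b : ℝ → ℝ} (hg : Continuous g) (hb : Continuous b)
    (hbnd : ∀ s ∈ Icc (0:ℝ) 1, |g s| ≤ b s) {x : ℝ} (hx : x ∈ Icc (0:ℝ) 1) :
    |Gop g x| ≤ (1-x) * (∫ s in (0:ℝ)..x, s * b s) + x * ∫ s in x..(1:ℝ), (1-s) * b s := by
  obtain ⟨hx0, hx1⟩ := hx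
  rw [Gop_rep hg, abs_neg]
  have b1 : |∫ s in (0:ℝ)..x, s*(1-x)*g s| ≤ (1-x) * ∫ s in (0:ℝ)..x, s * b s := by
    calc |∫ s in (0:ℝ)..x, s*(1-x)*g s| ≤ ∫ s in (0:ℝ)..x, |s*(1-x)*g s| :=
          intervalIntegral.abs_integral_le_integral_abs hx0
      _ ≤ ∫ s in (0:ℝ)..x, (1-x) * (s * b s) := by
          apply intervalIntegral.integral_mono_on hx0
            (Continuous.intervalIntegrable (by continuity) _ _)
            (Continuous.intervalIntegrable (by continuity) _ _)
          intro s ⟨hs0, hsx⟩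
          rw [abs_mul, abs_mul]
          have : |s| = s := abs_of_nonneg hs0
          have h1x : |1 - x| = 1 - x := abs_of_nonneg (by linarith)
          rw [this, h1x]
          have := hbnd s ⟨hs0, hsx.trans hx1⟩
          have hb0 : (0:ℝ) ≤ b s := le_trans (abs_nonneg _) this
          nlinarith [mul_le_mul_of_nonneg_left this
            (mul_nonneg hs0 (by linarith : (0:ℝ) ≤ 1 - x))]
      _ = (1-x) * ∫ s in (0:ℝ)..x, s * b s := intervalIntegral.integral_const_mul _ _
  have b2 : |∫ s in x..(1:ℝ), x*(1-s)*g s| ≤ x * ∫ s in x..(1:ℝ), (1-s) * b s := by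
    calc |∫ s in x..(1:ℝ), x*(1-s)*g s| ≤ ∫ s in x..(1:ℝ), |x*(1-s)*g s| :=
          intervalIntegral.abs_integral_le_integral_abs hx1
      _ ≤ ∫ s in x..(1:ℝ), x * ((1-s) * b s) := by
          apply intervalIntegral.integral_mono_on hx1
            (Continuous.intervalIntegrable (by continuity) _ _)
            (Continuous.intervalIntegrable (by continuity) _ _)
          intro s ⟨hsx, hs1⟩
          rw [abs_mul, abs_mul]
          rw [abs_of_nonneg hx0, abs_of_nonneg (by linarith : (0:ℝ) ≤ 1 - s)]
          have := hbnd s ⟨hx0.trans hsx, hs1⟩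
          have hb0 : (0:ℝ) ≤ b s := le_trans (abs_nonneg _) this
          nlinarith [mul_le_mul_of_nonneg_left this
            (mul_nonneg hx0 (by linarith : (0:ℝ) ≤ 1 - s))]
      _ = x * ∫ s in x..(1:ℝ), (1-s) * b s := intervalIntegral.integral_const_mul _ _
  calc |_| ≤ _ := abs_add_le _ _
    _ ≤ _ := add_le_add b1 b2

lemma abs_Gop'_le {g b : ℝ → ℝ} (hg : Continuous g) (hb : Continuous b)
    (hbnd : ∀ s ∈ Icc (0:ℝ) 1, |g s| ≤ b s) {x : ℝ} (hx : x ∈ Icc (0:ℝ) 1) :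
    |Gop' g x| ≤ (∫ s in (0:ℝ)..x, s * b s) + ∫ s in x..(1:ℝ), (1-s) * b s := by
  obtain ⟨hx0, hx1⟩ := hx
  rw [Gop'_rep hg]
  have b1 : |∫ s in (0:ℝ)..x, s*g s| ≤ ∫ s in (0:ℝ)..x, s * b s := by
    calc |∫ s in (0:ℝ)..x, s*g s| ≤ ∫ s in (0:ℝ)..x, |s*g s| :=
          intervalIntegral.abs_integral_le_integral_abs hx0
      _ ≤ ∫ s in (0:ℝ)..x, s * b s := by
          apply intervalIntegral.integral_mono_on hx0
            (Continuous.intervalIntegrable (by continuity) _ _)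
            (Continuous.intervalIntegrable (by continuity) _ _)
          intro s ⟨hs0, hsx⟩
          rw [abs_mul, abs_of_nonneg hs0]
          have := hbnd s ⟨hs0, hsx.trans hx1⟩
          have hb0 : (0:ℝ) ≤ b s := le_trans (abs_nonneg _) this
          nlinarith [mul_le_mul_of_nonneg_left this hs0]
  have b2 : |∫ s in x..(1:ℝ), (1-s)*g s| ≤ ∫ s in x..(1:ℝ), (1-s) * b s := by
    calc |∫ s in x..(1:ℝ), (1-s)*g s| ≤ ∫ s in x..(1:ℝ), |(1-s)*g s| :=
          intervalIntegral.abs_integral_le_integral_abs hx1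
      _ ≤ ∫ s in x..(1:ℝ), (1-s) * b s := by
          apply intervalIntegral.integral_mono_on hx1
            (Continuous.intervalIntegrable (by continuity) _ _)
            (Continuous.intervalIntegrable (by continuity) _ _)
          intro s ⟨hsx, hs1⟩
          rw [abs_mul, abs_of_nonneg (by linarith : (0:ℝ) ≤ 1 - s)]
          have := hbnd s ⟨hx0.trans hsx, hs1⟩
          have hb0 : (0:ℝ) ≤ b s := le_trans (abs_nonneg _) this
          nlinarith [mul_le_mul_of_nonneg_left this (by linarith : (0:ℝ) ≤ 1 - s)]
  calc |_| ≤ _ := abs_sub _ _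
    _ ≤ _ := add_le_add b1 b2

lemma ev1 (x C : ℝ) : (∫ s in (0:ℝ)..x, s * C) = C*x^2/2 := by
  rw [intervalIntegral.integral_congr
    (g := fun s : ℝ => (0:ℝ) + C*s + 0*s^2 + 0*s^3) (fun s _ => by ring),
    integral_cubic]; ring

lemma ev2 (x C : ℝ) : (∫ s in x..(1:ℝ), (1-s) * C) = C*(1-x)^2/2 := by
  rw [intervalIntegral.integral_congr
    (g := fun s : ℝ => C + (-C)*s + 0*s^2 + 0*s^3) (fun s _ => by ring),
    integral_cubic]; ring

lemma ev3 (x C : ℝ) : (∫ s in (0:ℝ)..x, s * (C*(s*(1-s)/2))) = C*(x^3/6 - x^4/8) := by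
  rw [intervalIntegral.integral_congr
    (g := fun s : ℝ => (0:ℝ) + 0*s + (C/2)*s^2 + (-(C/2))*s^3) (fun s _ => by ring),
    integral_cubic]; ring

lemma ev4 (x C : ℝ) : (∫ s in x..(1:ℝ), (1-s) * (C*(s*(1-s)/2)))
    = C*(1/24 - x^2/4 + x^3/3 - x^4/8) := by
  rw [intervalIntegral.integral_congr
    (g := fun s : ℝ => (0:ℝ) + (C/2)*s + (-C)*s^2 + (C/2)*s^3) (fun s _ => by ring),
    integral_cubic]; ring

/-- First-level bound: `|Gop g| ≤ C·x(1-x)/2`. -/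
lemma bound_Gop_A {g : ℝ → ℝ} {C : ℝ} (hg : Continuous g) (hC : 0 ≤ C)
    (hgb : ∀ s ∈ Icc (0:ℝ) 1, |g s| ≤ C) {x : ℝ} (hx : x ∈ Icc (0:ℝ) 1) :
    |Gop g x| ≤ C * (x*(1-x)/2) := by
  have h := abs_Gop_le hg continuous_const hgb hx
  rw [ev1, ev2] at h
  obtain ⟨hx0, hx1⟩ := hx
  nlinarith [h]

/-- Second-level bound: `|Gop (Gop g)| ≤ (5/384)·C`. -/
lemma bound_GopGop {g : ℝ → ℝ} {C : ℝ} (hg : Continuous g) (hC : 0 ≤ C)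
    (hgb : ∀ s ∈ Icc (0:ℝ) 1, |g s| ≤ C) {x : ℝ} (hx : x ∈ Icc (0:ℝ) 1) :
    |Gop (Gop g) x| ≤ (5/384) * C := by
  have hb : Continuous (fun s : ℝ => C*(s*(1-s)/2)) := by continuity
  have h := abs_Gop_le (continuous_Gop hg) hb
    (fun s hs => bound_Gop_A hg hC hgb hs) hx
  rw [ev3, ev4] at h
  obtain ⟨hx0, hx1⟩ := hx
  have key : (1-x) * (C*(x^3/6 - x^4/8)) + x * (C*(1/24 - x^2/4 + x^3/3 - x^4/8))
      ≤ 5/384 * C := by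
    nlinarith [sq_nonneg (1-2*x), mul_nonneg hx0 (by linarith : (0:ℝ) ≤ 1-x),
      mul_nonneg (mul_nonneg hx0 (by linarith : (0:ℝ) ≤ 1-x)) hC,
      sq_nonneg (x*(1-x)), mul_nonneg (sq_nonneg (1-2*x)) hC]
  linarith

/-- Derivative bound: `|Gop' (Gop g)| ≤ C/24`. -/
lemma bound_Gop'Gop {g : ℝ → ℝ} {C : ℝ} (hg : Continuous g) (hC : 0 ≤ C)
    (hgb : ∀ s ∈ Icc (0:ℝ) 1, |g s| ≤ C) {x : ℝ} (hx : x ∈ Icc (0:ℝ) 1) :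
    |Gop' (Gop g) x| ≤ (1/24) * C := by
  have hb : Continuous (fun s : ℝ => C*(s*(1-s)/2)) := by continuity
  have h := abs_Gop'_le (continuous_Gop hg) hb
    (fun s hs => bound_Gop_A hg hC hgb hs) hx
  rw [ev3, ev4] at h
  obtain ⟨hx0, hx1⟩ := hx
  have key : (C*(x^3/6 - x^4/8)) + (C*(1/24 - x^2/4 + x^3/3 - x^4/8)) ≤ 1/24 * C := by
    nlinarith [mul_nonneg (sq_nonneg (x*(1-x))) hC]
  linarith

/-- Linearity of `Gop` w.r.t. subtraction. -/
lemma Gop_sub {g₁ g₂ : ℝ → ℝ} (h1 : Continuous g₁) (h2 : Continuous g₂) :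
    Gop (fun s => g₁ s - g₂ s) = fun x => Gop g₁ x - Gop g₂ x := by
  funext x
  have i1 : ∀ a b : ℝ, IntervalIntegrable g₁ MeasureTheory.volume a b :=
    fun a b => h1.intervalIntegrable _ _
  have i2 : ∀ a b : ℝ, IntervalIntegrable g₂ MeasureTheory.volume a b :=
    fun a b => h2.intervalIntegrable _ _
  have i3 : ∀ a b : ℝ, IntervalIntegrable (fun s => s * g₁ s) MeasureTheory.volume a b :=
    fun a b => Continuous.intervalIntegrable (by continuity) _ _
  have i4 : ∀ a b : ℝ, IntervalIntegrable (fun s => s * g₂ s) MeasureTheory.volume a b :=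
    fun a b => Continuous.intervalIntegrable (by continuity) _ _
  have i5 : ∀ a b : ℝ, IntervalIntegrable (fun s => (1-s) * g₁ s) MeasureTheory.volume a b :=
    fun a b => Continuous.intervalIntegrable (by continuity) _ _
  have i6 : ∀ a b : ℝ, IntervalIntegrable (fun s => (1-s) * g₂ s) MeasureTheory.volume a b :=
    fun a b => Continuous.intervalIntegrable (by continuity) _ _
  simp only [Gop]
  rw [show (fun s => s * (g₁ s - g₂ s)) = fun s => s * g₁ s - s * g₂ s from
        funext fun s => by ring] at *
  rw [show (fun s => (1-s) * (g₁ s - g₂ s)) = fun s => (1-s) * g₁ s - (1-s) * g₂ s from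
        funext fun s => by ring]
  rw [intervalIntegral.integral_sub (i1 _ _) (i2 _ _)]
  rw [intervalIntegral.integral_sub (i3 _ _) (i4 _ _)]
  rw [intervalIntegral.integral_sub (i5 _ _) (i6 _ _)]
  ring

lemma Gop'_sub {g₁ g₂ : ℝ → ℝ} (h1 : Continuous g₁) (h2 : Continuous g₂) :
    Gop' (fun s => g₁ s - g₂ s) = fun x => Gop' g₁ x - Gop' g₂ x := by
  funext x
  have i5 : ∀ a b : ℝ, IntervalIntegrable (fun s => (1-s) * g₁ s) MeasureTheory.volume a b :=
    fun a b => Continuous.intervalIntegrable (by continuity) _ _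
  have i6 : ∀ a b : ℝ, IntervalIntegrable (fun s => (1-s) * g₂ s) MeasureTheory.volume a b :=
    fun a b => Continuous.intervalIntegrable (by continuity) _ _
  simp only [Gop']
  rw [show (fun s => (1-s) * (g₁ s - g₂ s)) = fun s => (1-s) * g₁ s - (1-s) * g₂ s from
        funext fun s => by ring]
  rw [intervalIntegral.integral_sub (h1.intervalIntegrable _ _) (h2.intervalIntegrable _ _)]
  rw [intervalIntegral.integral_sub (i5 _ _) (i6 _ _)]
  ring

lemma uD : UniqueDiffOn ℝ (Icc (0:ℝ) 1) := uniqueDiffOn_Icc (by norm_num)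

/-- derivWithin of a function agreeing on Icc with a globally differentiable one. -/
lemma derivWithin_eq_of_eqOn {φ ψ ψ' : ℝ → ℝ} (h : EqOn φ ψ (Icc (0:ℝ) 1))
    (hψ : ∀ y, HasDerivAt ψ (ψ' y) y) {x : ℝ} (hx : x ∈ Icc (0:ℝ) 1) :
    derivWithin φ (Icc (0:ℝ) 1) x = ψ' x := by
  rw [derivWithin_congr h (h hx)]
  exact ((hψ x).hasDerivWithinAt).derivWithin (uD x hx)

/-- iterated derivatives within Icc of a function with explicit global derivative chain -/
lemma iteratedDerivWithin_chain {φ0 φ1 φ2 φ3 φ4 : ℝ → ℝ}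
    (h1 : ∀ y, HasDerivAt φ0 (φ1 y) y) (h2 : ∀ y, HasDerivAt φ1 (φ2 y) y)
    (h3 : ∀ y, HasDerivAt φ2 (φ3 y) y) (h4 : ∀ y, HasDerivAt φ3 (φ4 y) y) :
    (∀ x ∈ Icc (0:ℝ) 1, derivWithin φ0 (Icc (0:ℝ) 1) x = φ1 x) ∧
    (∀ x ∈ Icc (0:ℝ) 1, iteratedDerivWithin 2 φ0 (Icc (0:ℝ) 1) x = φ2 x) ∧
    (∀ x ∈ Icc (0:ℝ) 1, iteratedDerivWithin 4 φ0 (Icc (0:ℝ) 1) x = φ4 x) := by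
  have e1 : ∀ x ∈ Icc (0:ℝ) 1, derivWithin φ0 (Icc (0:ℝ) 1) x = φ1 x :=
    fun x hx => derivWithin_eq_of_eqOn (fun y _ => rfl) h1 hx
  have e1' : ∀ x ∈ Icc (0:ℝ) 1, iteratedDerivWithin 1 φ0 (Icc (0:ℝ) 1) x = φ1 x := by
    intro x hx; rw [iteratedDerivWithin_one]; exact e1 x hx
  have e2 : ∀ x ∈ Icc (0:ℝ) 1, iteratedDerivWithin 2 φ0 (Icc (0:ℝ) 1) x = φ2 x := by
    intro x hx
    rw [show (2:ℕ) = 1 + 1 from rfl, iteratedDerivWithin_succ]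
    exact derivWithin_eq_of_eqOn e1' h2 hx
  have e3 : ∀ x ∈ Icc (0:ℝ) 1, iteratedDerivWithin 3 φ0 (Icc (0:ℝ) 1) x = φ3 x := by
    intro x hx
    rw [show (3:ℕ) = 2 + 1 from rfl, iteratedDerivWithin_succ]
    exact derivWithin_eq_of_eqOn e2 h3 hx
  have e4 : ∀ x ∈ Icc (0:ℝ) 1, iteratedDerivWithin 4 φ0 (Icc (0:ℝ) 1) x = φ4 x := by
    intro x hx
    rw [show (4:ℕ) = 3 + 1 from rfl, iteratedDerivWithin_succ]
    exact derivWithin_eq_of_eqOn e3 h4 hx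
  exact ⟨e1, e2, e4⟩

/-- inequality extension from the open interval to the closed one by continuity. -/
lemma le_on_Icc_of_le_on_Ioo {φ : ℝ → ℝ} {M : ℝ} (hφ : ContinuousOn φ (Icc (0:ℝ) 1))
    (h : ∀ x ∈ Ioo (0:ℝ) 1, φ x ≤ M) : ∀ x ∈ Icc (0:ℝ) 1, φ x ≤ M := by
  intro x hx
  have hcl : x ∈ closure (Ioo (0:ℝ) 1) := by
    rw [closure_Ioo (by norm_num : (0:ℝ) ≠ 1)]; exact hx
  have hne : (nhdsWithin x (Ioo (0:ℝ) 1)).NeBot := mem_closure_iff_nhdsWithin_neBot.mp hcl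
  have ht : Filter.Tendsto φ (nhdsWithin x (Ioo (0:ℝ) 1)) (nhds (φ x)) :=
    (hφ x hx).mono Ioo_subset_Icc_self
  exact le_of_tendsto ht (Filter.eventually_of_mem self_mem_nhdsWithin h)

/-- equality extension from open to closed interval by continuity. -/
lemma eqOn_Icc_of_eqOn_Ioo {φ ψ : ℝ → ℝ} (hφ : ContinuousOn φ (Icc (0:ℝ) 1))
    (hψ : ContinuousOn ψ (Icc (0:ℝ) 1))
    (h : ∀ x ∈ Ioo (0:ℝ) 1, φ x = ψ x) : EqOn φ ψ (Icc (0:ℝ) 1) := by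
  intro x hx
  have hcl : x ∈ closure (Ioo (0:ℝ) 1) := by
    rw [closure_Ioo (by norm_num : (0:ℝ) ≠ 1)]; exact hx
  have hne : (nhdsWithin x (Ioo (0:ℝ) 1)).NeBot := mem_closure_iff_nhdsWithin_neBot.mp hcl
  have ht1 : Filter.Tendsto φ (nhdsWithin x (Ioo (0:ℝ) 1)) (nhds (φ x)) :=
    (hφ x hx).mono Ioo_subset_Icc_self
  have ht2 : Filter.Tendsto φ (nhdsWithin x (Ioo (0:ℝ) 1)) (nhds (ψ x)) := by
    apply Filter.Tendsto.congr' _ ((hψ x hx).mono Ioo_subset_Icc_self)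
    exact Filter.eventuallyEq_of_mem self_mem_nhdsWithin (fun y hy => (h y hy).symm)
  exact tendsto_nhds_unique ht1 ht2

/-- A function continuous on `[0,1]` whose derivative vanishes on `(0,1)` is constant. -/
lemma const_of_deriv_zero {φ φ' : ℝ → ℝ} (hc : ContinuousOn φ (Icc (0:ℝ) 1))
    (hd : ∀ x ∈ Ioo (0:ℝ) 1, HasDerivAt φ (φ' x) x)
    (hz : ∀ x ∈ Ioo (0:ℝ) 1, φ' x = 0) :
    ∀ x ∈ Icc (0:ℝ) 1, φ x = φ 0 := by
  intro x hx
  obtain ⟨hx0, hx1⟩ := hx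
  rcases eq_or_lt_of_le hx0 with h|h
  · rw [← h]
  obtain ⟨c, hc1, hc2⟩ := exists_hasDerivAt_eq_slope φ φ' h
    (hc.mono (Icc_subset_Icc le_rfl hx1))
    (fun y hy => hd y ⟨hy.1, lt_of_lt_of_le hy.2 hx1⟩)
  rw [hz c ⟨hc1.1, lt_of_lt_of_le hc1.2 hx1⟩] at hc2
  field_simp at hc2
  linarith


noncomputable def clampR (A t : ℝ) : ℝ := max (-A) (min A t)

lemma abs_clampR_le {A : ℝ} (hA : 0 ≤ A) (t : ℝ) : |clampR A t| ≤ A := by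
  rw [abs_le]; constructor
  · exact le_max_left _ _
  · exact max_le (by linarith) (min_le_left _ _)

lemma clampR_eq {A t : ℝ} (h : |t| ≤ A) : clampR A t = t := by
  rw [abs_le] at h
  rw [clampR, min_eq_right h.2, max_eq_right (by linarith)]

lemma continuous_clampR {A : ℝ} : Continuous (clampR A) :=
  continuous_const.max (continuous_const.min continuous_id)

noncomputable def cl01 (x : ℝ) : ℝ := max 0 (min 1 x)

lemma cl01_mem (x : ℝ) : cl01 x ∈ Icc (0:ℝ) 1 :=
  ⟨le_max_left _ _, max_le (by norm_num) (min_le_left _ _)⟩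

lemma cl01_eq {x : ℝ} (h : x ∈ Icc (0:ℝ) 1) : cl01 x = x := by
  rw [cl01, min_eq_right h.2, max_eq_right h.1]

lemma continuous_cl01 : Continuous cl01 :=
  continuous_const.max (continuous_const.min continuous_id)


set_option maxHeartbeats 1000000

/-- The domain 𝒟_M. -/
def DM (M M2 : ℝ) : Set (ℝ × ℝ × ℝ × ℝ) :=
  {p | p.1 ∈ Icc (0:ℝ) 1 ∧ |p.2.1| ≤ (5/384) * M ∧ |p.2.2.1| ≤ (1/24) * M ∧
       |p.2.2.2| ≤ (5/384) * M2 * M}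

/-- u is a solution of the BVP u'''' = f(x,u,u',∫k u), u(0)=u(1)=u''(0)=u''(1)=0,
satisfying the bounds |u| ≤ (5/384)M, |u'| ≤ (1/24)M. -/
def IsSol (k : ℝ → ℝ → ℝ) (f : ℝ → ℝ → ℝ → ℝ → ℝ) (M : ℝ) (u : ℝ → ℝ) : Prop :=
  ContDiffOn ℝ 4 u (Icc (0:ℝ) 1) ∧
  (∀ x ∈ Ioo (0:ℝ) 1, iteratedDerivWithin 4 u (Icc (0:ℝ) 1) x
      = f x (u x) (derivWithin u (Icc (0:ℝ) 1) x) (∫ t in (0:ℝ)..1, k x t * u t)) ∧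
  u 0 = 0 ∧ u 1 = 0 ∧
  iteratedDerivWithin 2 u (Icc (0:ℝ) 1) 0 = 0 ∧
  iteratedDerivWithin 2 u (Icc (0:ℝ) 1) 1 = 0 ∧
  (∀ x ∈ Icc (0:ℝ) 1, |u x| ≤ (5/384) * M ∧ |derivWithin u (Icc (0:ℝ) 1) x| ≤ (1/24) * M)

theorem stmt_8 (k : ℝ → ℝ → ℝ) (f : ℝ → ℝ → ℝ → ℝ → ℝ) (M L0 L1 L2 M2 : ℝ)
    (hk : ContinuousOn (fun p : ℝ × ℝ => k p.1 p.2) (Icc (0:ℝ) 1 ×ˢ Icc (0:ℝ) 1))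
    (hM2 : IsGreatest {y : ℝ | ∃ x ∈ Icc (0:ℝ) 1, y = ∫ t in (0:ℝ)..1, |k x t|} M2)
    (hM : 0 < M) (hL0 : 0 ≤ L0) (hL1 : 0 ≤ L1) (hL2 : 0 ≤ L2)
    (hfc : ContinuousOn (fun p : ℝ × ℝ × ℝ × ℝ => f p.1 p.2.1 p.2.2.1 p.2.2.2) (DM M M2))
    (hfb : ∀ x u v z, (x, u, v, z) ∈ DM M M2 → |f x u v z| ≤ M)
    (hlip : ∀ x₁ u₁ v₁ z₁ x₂ u₂ v₂ z₂, (x₁, u₁, v₁, z₁) ∈ DM M M2 →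
      (x₂, u₂, v₂, z₂) ∈ DM M M2 →
      |f x₂ u₂ v₂ z₂ - f x₁ u₁ v₁ z₁| ≤ L0 * |u₂ - u₁| + L1 * |v₂ - v₁| + L2 * |z₂ - z₁|)
    (hq : L0 * (5/384) + L1 * (1/24) + L2 * ((5/384) * M2) < 1) :
    ∃ u : ℝ → ℝ, IsSol k f M u ∧ ∀ w : ℝ → ℝ, IsSol k f M w → EqOn w u (Icc (0:ℝ) 1) := by
  have h01 : (0:ℝ) ≤ 1 := zero_le_one
  -- basic facts about M2
  have hM2ub : ∀ x ∈ Icc (0:ℝ) 1, (∫ t in (0:ℝ)..1, |k x t|) ≤ M2 :=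
    fun x hx => hM2.2 ⟨x, hx, rfl⟩
  have hM20 : 0 ≤ M2 := by
    obtain ⟨x, hx, hEq⟩ := hM2.1
    rw [hEq]
    exact intervalIntegral.integral_nonneg h01 (fun t _ => abs_nonneg _)
  -- extended kernel
  set kk : ℝ → ℝ → ℝ :=
    fun x t => k (projIcc (0:ℝ) 1 h01 x) (projIcc (0:ℝ) 1 h01 t) with kk_def
  have hkk : Continuous (fun p : ℝ × ℝ => kk p.1 p.2) := by
    rw [kk_def]
    exact hk.comp_continuous
      (f := fun p : ℝ × ℝ => ((projIcc (0:ℝ) 1 h01 p.1 : ℝ), (projIcc (0:ℝ) 1 h01 p.2 : ℝ)))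
      (((continuous_subtype_val.comp continuous_projIcc).comp continuous_fst).prodMk
        ((continuous_subtype_val.comp continuous_projIcc).comp continuous_snd))
      (fun p => ⟨(projIcc (0:ℝ) 1 h01 p.1).2, (projIcc (0:ℝ) 1 h01 p.2).2⟩)
  have hkk_eq : ∀ x ∈ Icc (0:ℝ) 1, ∀ t ∈ Icc (0:ℝ) 1, kk x t = k x t := by
    intro x hx t ht
    rw [kk_def]; simp only [projIcc_of_mem h01 hx, projIcc_of_mem h01 ht]
  -- clamped nonlinearity
  have hA0 : (0:ℝ) ≤ 5/384*M := by positivity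
  have hA1 : (0:ℝ) ≤ 1/24*M := by positivity
  have hA2 : (0:ℝ) ≤ 5/384*M2*M := by positivity
  set F : ℝ → ℝ → ℝ → ℝ → ℝ := fun x u v z =>
    f (cl01 x) (clampR (5/384*M) u) (clampR (1/24*M) v) (clampR (5/384*M2*M) z) with F_def
  have hPmem : ∀ x u v z : ℝ,
      (cl01 x, clampR (5/384*M) u, clampR (1/24*M) v, clampR (5/384*M2*M) z) ∈ DM M M2 := by
    intro x u v z
    refine ⟨cl01_mem x, ?_, ?_, ?_⟩
    · simpa using abs_clampR_le hA0 u
    · simpa using abs_clampR_le hA1 v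
    · have := abs_clampR_le hA2 z
      calc |clampR (5/384*M2*M) z| ≤ 5/384*M2*M := this
        _ = 5/384*M2*M := by ring
  have hFc : Continuous (fun p : ℝ × ℝ × ℝ × ℝ => F p.1 p.2.1 p.2.2.1 p.2.2.2) := by
    rw [F_def]
    exact hfc.comp_continuous
      (f := fun p : ℝ × ℝ × ℝ × ℝ => (cl01 p.1, clampR (5/384*M) p.2.1,
        clampR (1/24*M) p.2.2.1, clampR (5/384*M2*M) p.2.2.2))
      (by
        apply Continuous.prodMk (continuous_cl01.comp continuous_fst)
        apply Continuous.prodMk (continuous_clampR.comp (continuous_fst.comp continuous_snd))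
        apply Continuous.prodMk
          (continuous_clampR.comp (continuous_fst.comp (continuous_snd.comp continuous_snd)))
        exact continuous_clampR.comp (continuous_snd.comp (continuous_snd.comp continuous_snd)))
      (fun p => hPmem p.1 p.2.1 p.2.2.1 p.2.2.2)
  have hFeq : ∀ x u v z : ℝ, (x, u, v, z) ∈ DM M M2 → F x u v z = f x u v z := by
    intro x u v z ⟨h1, h2, h3, h4⟩
    rw [F_def]
    simp only
    rw [cl01_eq h1, clampR_eq (by linarith), clampR_eq (by linarith),
      clampR_eq (by linarith)]
  have hFb : ∀ x u v z : ℝ, |F x u v z| ≤ M :=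
    fun x u v z => hfb _ _ _ _ (hPmem x u v z)
  -- the Banach space and the ball
  have hclosed : IsClosed {h : C(Icc (0:ℝ) 1, ℝ) | ‖h‖ ≤ M} :=
    isClosed_le continuous_norm continuous_const
  haveI : CompleteSpace {h : C(Icc (0:ℝ) 1, ℝ) // ‖h‖ ≤ M} := hclosed.completeSpace_coe
  haveI : Nonempty {h : C(Icc (0:ℝ) 1, ℝ) // ‖h‖ ≤ M} := ⟨⟨0, by simp [hM.le]⟩⟩
  -- extension of elements of the ball to ℝ
  set ext : {h : C(Icc (0:ℝ) 1, ℝ) // ‖h‖ ≤ M} → ℝ → ℝ :=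
    fun h x => (h : C(Icc (0:ℝ) 1, ℝ)) (projIcc (0:ℝ) 1 h01 x) with ext_def
  have hextc : ∀ h, Continuous (ext h) :=
    fun h => (h : C(Icc (0:ℝ) 1, ℝ)).continuous.comp continuous_projIcc
  have hextb : ∀ h, ∀ x : ℝ, |ext h x| ≤ M := by
    intro h x
    calc |ext h x| = ‖(h : C(Icc (0:ℝ) 1, ℝ)) (projIcc (0:ℝ) 1 h01 x)‖ := rfl
      _ ≤ ‖(h : C(Icc (0:ℝ) 1, ℝ))‖ := ContinuousMap.norm_coe_le_norm _ _
      _ ≤ M := h.2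
  have hext_eq : ∀ h, ∀ x ∈ Icc (0:ℝ) 1, ∀ hx : x ∈ Icc (0:ℝ) 1,
      ext h x = (h : C(Icc (0:ℝ) 1, ℝ)) ⟨x, hx⟩ := by
    intro h x hx hx'
    rw [ext_def]; simp only [projIcc_of_mem h01 hx]
  -- the three operators
  set U : ({h : C(Icc (0:ℝ) 1, ℝ) // ‖h‖ ≤ M}) → ℝ → ℝ :=
    fun h => Gop (Gop (ext h)) with U_def
  set V : ({h : C(Icc (0:ℝ) 1, ℝ) // ‖h‖ ≤ M}) → ℝ → ℝ :=
    fun h => Gop' (Gop (ext h)) with V_def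
  set Z : ({h : C(Icc (0:ℝ) 1, ℝ) // ‖h‖ ≤ M}) → ℝ → ℝ :=
    fun h x => ∫ t in (0:ℝ)..1, kk x t * U h t with Z_def
  have hUc : ∀ h, Continuous (U h) := fun h => continuous_Gop (continuous_Gop (hextc h))
  have hVc : ∀ h, Continuous (V h) := fun h => continuous_Gop' (continuous_Gop (hextc h))
  have hZc : ∀ h, Continuous (Z h) := by
    intro h
    rw [Z_def]
    exact intervalIntegral.continuous_parametric_intervalIntegral_of_continuous'
      (by exact (hkk.mul ((hUc h).comp continuous_snd))) 0 1
  have hUb : ∀ h, ∀ x ∈ Icc (0:ℝ) 1, |U h x| ≤ 5/384*M :=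
    fun h x hx => bound_GopGop (hextc h) hM.le (fun s _ => hextb h s) hx
  have hVb : ∀ h, ∀ x ∈ Icc (0:ℝ) 1, |V h x| ≤ 1/24*M :=
    fun h x hx => bound_Gop'Gop (hextc h) hM.le (fun s _ => hextb h s) hx
  -- bound for integrals against the kernel
  have hZgen : ∀ (φ : ℝ → ℝ) (c : ℝ), Continuous φ → 0 ≤ c →
      (∀ t ∈ Icc (0:ℝ) 1, |φ t| ≤ c) → ∀ x ∈ Icc (0:ℝ) 1,
      |∫ t in (0:ℝ)..1, kk x t * φ t| ≤ M2 * c := by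
    intro φ c hφ hc hφb x hx
    have hkxc : Continuous (fun t => kk x t) := hkk.comp (Continuous.prodMk_right x)
    calc |∫ t in (0:ℝ)..1, kk x t * φ t| ≤ ∫ t in (0:ℝ)..1, |kk x t * φ t| :=
          intervalIntegral.abs_integral_le_integral_abs h01
      _ ≤ ∫ t in (0:ℝ)..1, |kk x t| * c := by
          apply intervalIntegral.integral_mono_on h01
            (Continuous.intervalIntegrable ((hkxc.mul hφ).abs) _ _)
            (Continuous.intervalIntegrable (hkxc.abs.mul continuous_const) _ _)
          intro t ht
          show |kk x t * φ t| ≤ |kk x t| * c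
          rw [abs_mul]
          exact mul_le_mul_of_nonneg_left (hφb t ht) (abs_nonneg _)
      _ = (∫ t in (0:ℝ)..1, |kk x t|) * c := intervalIntegral.integral_mul_const _ _
      _ = (∫ t in (0:ℝ)..1, |k x t|) * c := by
          rw [intervalIntegral.integral_congr (g := fun t => |k x t|)]
          intro t ht
          rw [uIcc_of_le h01] at ht
          show |kk x t| = |k x t|
          rw [hkk_eq x hx t ht]
      _ ≤ M2 * c := mul_le_mul_of_nonneg_right (hM2ub x hx) hc
  have hZb : ∀ h, ∀ x ∈ Icc (0:ℝ) 1, |Z h x| ≤ 5/384*M2*M := by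
    intro h x hx
    have := hZgen (U h) (5/384*M) (hUc h) hA0 (hUb h) x hx
    rw [Z_def]
    calc |∫ t in (0:ℝ)..1, kk x t * U h t| ≤ M2 * (5/384*M) := this
      _ = 5/384*M2*M := by ring
  -- membership in the domain
  have hmem : ∀ h, ∀ x ∈ Icc (0:ℝ) 1, (x, U h x, V h x, Z h x) ∈ DM M M2 := by
    intro h x hx
    refine ⟨hx, ?_, ?_, ?_⟩
    · calc |U h x| ≤ 5/384*M := hUb h x hx
        _ = 5/384*M := by ring
    · calc |V h x| ≤ 1/24*M := hVb h x hx
        _ = 1/24*M := by ring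
    · calc |Z h x| ≤ 5/384*M2*M := hZb h x hx
        _ = 5/384*M2*M := by ring
  -- the operator T
  have hTc : ∀ h, Continuous (fun x : Icc (0:ℝ) 1 => F x (U h x) (V h x) (Z h x)) := by
    intro h
    exact hFc.comp (continuous_subtype_val.prodMk
      ((((hUc h).comp continuous_subtype_val)).prodMk
        ((((hVc h).comp continuous_subtype_val)).prodMk
          (((hZc h).comp continuous_subtype_val)))))
  set T : ({h : C(Icc (0:ℝ) 1, ℝ) // ‖h‖ ≤ M}) → ({h : C(Icc (0:ℝ) 1, ℝ) // ‖h‖ ≤ M}) :=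
    fun h => ⟨⟨fun x : Icc (0:ℝ) 1 => F x (U h x) (V h x) (Z h x), hTc h⟩,
      by
        rw [ContinuousMap.norm_le _ hM.le]
        intro x
        exact hFb _ _ _ _⟩ with T_def
  -- contraction estimate
  have hq0 : 0 ≤ L0 * (5/384) + L1 * (1/24) + L2 * ((5/384) * M2) := by
    have : 0 ≤ L2 * ((5/384) * M2) := mul_nonneg hL2 (mul_nonneg (by norm_num) hM20)
    nlinarith
  have hTlip : ∀ h₁ h₂, dist (T h₁) (T h₂)
      ≤ (L0 * (5/384) + L1 * (1/24) + L2 * ((5/384) * M2)) * dist h₁ h₂ := by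
    intro h₁ h₂
    have hd0 : 0 ≤ dist h₁ h₂ := dist_nonneg
    have hgd : ∀ s : ℝ, |ext h₁ s - ext h₂ s| ≤ dist h₁ h₂ := by
      intro s
      have h := ContinuousMap.dist_apply_le_dist
        (f := (h₁ : C(Icc (0:ℝ) 1, ℝ))) (g := (h₂ : C(Icc (0:ℝ) 1, ℝ)))
        (projIcc (0:ℝ) 1 h01 s)
      rw [Real.dist_eq] at h
      rw [Subtype.dist_eq]
      exact h
    have he1 : Continuous (ext h₁) := hextc h₁
    have he2 : Continuous (ext h₂) := hextc h₂
    have hdiffc : Continuous (fun s => ext h₁ s - ext h₂ s) := he1.sub he2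
    have hU12 : ∀ x : ℝ, Gop (Gop (fun s => ext h₁ s - ext h₂ s)) x = U h₁ x - U h₂ x := by
      intro x
      rw [Gop_sub he1 he2]
      rw [show Gop (fun y => Gop (ext h₁) y - Gop (ext h₂) y)
          = fun y => Gop (Gop (ext h₁)) y - Gop (Gop (ext h₂)) y from
        Gop_sub (continuous_Gop he1) (continuous_Gop he2)]
    have hV12 : ∀ x : ℝ, Gop' (Gop (fun s => ext h₁ s - ext h₂ s)) x = V h₁ x - V h₂ x := by
      intro x
      rw [Gop_sub he1 he2]
      rw [show Gop' (fun y => Gop (ext h₁) y - Gop (ext h₂) y)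
          = fun y => Gop' (Gop (ext h₁)) y - Gop' (Gop (ext h₂)) y from
        Gop'_sub (continuous_Gop he1) (continuous_Gop he2)]
    have hUd : ∀ x ∈ Icc (0:ℝ) 1, |U h₁ x - U h₂ x| ≤ 5/384 * dist h₁ h₂ := by
      intro x hx
      rw [← hU12]
      exact bound_GopGop hdiffc hd0 (fun s _ => hgd s) hx
    have hVd : ∀ x ∈ Icc (0:ℝ) 1, |V h₁ x - V h₂ x| ≤ 1/24 * dist h₁ h₂ := by
      intro x hx
      rw [← hV12]
      exact bound_Gop'Gop hdiffc hd0 (fun s _ => hgd s) hx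
    have hZd : ∀ x ∈ Icc (0:ℝ) 1, |Z h₁ x - Z h₂ x| ≤ M2 * (5/384 * dist h₁ h₂) := by
      intro x hx
      have hsub : Z h₁ x - Z h₂ x = ∫ t in (0:ℝ)..1, kk x t * (U h₁ t - U h₂ t) := by
        rw [Z_def]
        simp only
        rw [← intervalIntegral.integral_sub]
        · apply intervalIntegral.integral_congr
          intro t _
          ring
        · exact Continuous.intervalIntegrable
            ((hkk.comp (Continuous.prodMk_right x)).mul (hUc h₁)) _ _
        · exact Continuous.intervalIntegrable
            ((hkk.comp (Continuous.prodMk_right x)).mul (hUc h₂)) _ _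
      rw [hsub]
      exact hZgen _ _ ((hUc h₁).sub (hUc h₂))
        (by positivity) hUd x hx
    rw [Subtype.dist_eq, ContinuousMap.dist_le (mul_nonneg hq0 hd0)]
    intro x
    rw [Real.dist_eq]
    show |F x (U h₁ x) (V h₁ x) (Z h₁ x) - F x (U h₂ x) (V h₂ x) (Z h₂ x)|
      ≤ _
    rw [hFeq _ _ _ _ (hmem h₁ x x.2), hFeq _ _ _ _ (hmem h₂ x x.2)]
    have hl := hlip x (U h₂ x) (V h₂ x) (Z h₂ x) x (U h₁ x) (V h₁ x) (Z h₁ x)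
      (hmem h₂ x x.2) (hmem h₁ x x.2)
    have b1 := hUd x x.2
    have b2 := hVd x x.2
    have b3 := hZd x x.2
    calc |f ↑x (U h₁ ↑x) (V h₁ ↑x) (Z h₁ ↑x) - f ↑x (U h₂ ↑x) (V h₂ ↑x) (Z h₂ ↑x)|
        ≤ L0 * |U h₁ ↑x - U h₂ ↑x| + L1 * |V h₁ ↑x - V h₂ ↑x| + L2 * |Z h₁ ↑x - Z h₂ ↑x| := hl
      _ ≤ (L0 * (5/384) + L1 * (1/24) + L2 * ((5/384) * M2)) * dist h₁ h₂ := by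
          have := mul_le_mul_of_nonneg_left b1 hL0
          have := mul_le_mul_of_nonneg_left b2 hL1
          have := mul_le_mul_of_nonneg_left b3 hL2
          nlinarith
  have hcontr : ContractingWith
      ⟨L0 * (5/384) + L1 * (1/24) + L2 * ((5/384) * M2), hq0⟩ T := by
    constructor
    · exact_mod_cast hq
    · exact LipschitzWith.of_dist_le_mul hTlip
  set S := ContractingWith.fixedPoint T hcontr with S_def
  have hfix : T S = S := hcontr.fixedPoint_isFixedPt
  have hgS : Continuous (ext S) := hextc S
  obtain ⟨e1, e2, e4⟩ := iteratedDerivWithin_chain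
    (φ0 := U S) (φ1 := V S) (φ2 := Gop (ext S)) (φ3 := Gop' (ext S)) (φ4 := ext S)
    (fun y => hasDerivAt_Gop (continuous_Gop hgS) y)
    (fun y => hasDerivAt_Gop' (continuous_Gop hgS) y)
    (fun y => hasDerivAt_Gop hgS y)
    (fun y => hasDerivAt_Gop' hgS y)
  have hZS : ∀ x ∈ Icc (0:ℝ) 1, (∫ t in (0:ℝ)..1, k x t * U S t) = Z S x := by
    intro x hx
    rw [Z_def]
    apply intervalIntegral.integral_congr
    intro t ht
    rw [uIcc_of_le h01] at ht
    show k x t * U S t = kk x t * U S t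
    rw [hkk_eq x hx t ht]
  have hSol : IsSol k f M (U S) := by
    refine ⟨(contDiff_GopGop hgS).contDiffOn, ?_, Gop_zero, Gop_one (continuous_Gop hgS),
      ?_, ?_, ?_⟩
    · intro x hx
      have hxI : x ∈ Icc (0:ℝ) 1 := Ioo_subset_Icc_self hx
      rw [e4 x hxI, e1 x hxI, hZS x hxI]
      have hval : ext S x = F x (U S x) (V S x) (Z S x) := by
        conv_lhs => rw [hext_eq S x hxI hxI, ← hfix]
        rw [T_def]
        simp only [ContinuousMap.coe_mk]
      rw [hval, hFeq _ _ _ _ (hmem S x hxI)]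
    · rw [e2 0 ⟨le_rfl, h01⟩]; exact Gop_zero
    · rw [e2 1 ⟨h01, le_rfl⟩]; exact Gop_one hgS
    · intro x hx
      refine ⟨hUb S x hx, ?_⟩
      rw [e1 x hx]
      exact hVb S x hx
  refine ⟨U S, hSol, ?_⟩
  -- uniqueness
  intro w hw
  obtain ⟨hw_cd, hw_ode, hw0, hw1, hw20, hw21, hw_bd⟩ := hw
  set gw := iteratedDerivWithin 4 w (Icc (0:ℝ) 1) with gw_def
  have hgwc : ContinuousOn gw (Icc (0:ℝ) 1) :=
    hw_cd.continuousOn_iteratedDerivWithin (by norm_num) uD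
  set W1 := derivWithin w (Icc (0:ℝ) 1) with W1_def
  set W2 := iteratedDerivWithin 2 w (Icc (0:ℝ) 1) with W2_def
  set W3 := iteratedDerivWithin 3 w (Icc (0:ℝ) 1) with W3_def
  have hW1eq : ∀ x ∈ Icc (0:ℝ) 1, iteratedDerivWithin 1 w (Icc (0:ℝ) 1) x = W1 x :=
    fun x hx => by rw [iteratedDerivWithin_one]
  have hW1c : ContinuousOn W1 (Icc (0:ℝ) 1) :=
    (hw_cd.continuousOn_iteratedDerivWithin (n := 4) (m := 1) (by norm_num) uD).congr
      (fun x hx => (hW1eq x hx).symm)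
  have hW2c : ContinuousOn W2 (Icc (0:ℝ) 1) :=
    hw_cd.continuousOn_iteratedDerivWithin (by norm_num) uD
  have hW3c : ContinuousOn W3 (Icc (0:ℝ) 1) :=
    hw_cd.continuousOn_iteratedDerivWithin (by norm_num) uD
  -- derivative facts at interior points
  have hD : ∀ i : ℕ, (i:ℕ) < 4 → ∀ x ∈ Ioo (0:ℝ) 1,
      HasDerivAt (iteratedDerivWithin i w (Icc (0:ℝ) 1))
        (iteratedDerivWithin (i+1) w (Icc (0:ℝ) 1) x) x := by
    intro i hi x hx
    have hxI : x ∈ Icc (0:ℝ) 1 := Ioo_subset_Icc_self hx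
    have hnb : Icc (0:ℝ) 1 ∈ nhds x := Icc_mem_nhds hx.1 hx.2
    have hdw : DifferentiableWithinAt ℝ (iteratedDerivWithin i w (Icc (0:ℝ) 1))
        (Icc (0:ℝ) 1) x :=
      hw_cd.differentiableOn_iteratedDerivWithin (by exact_mod_cast hi) uD x hxI
    have hda := (hdw.differentiableAt hnb).hasDerivAt
    rwa [← derivWithin_of_mem_nhds hnb, ← iteratedDerivWithin_succ] at hda
  have hDw : ∀ x ∈ Ioo (0:ℝ) 1, HasDerivAt w (W1 x) x := by
    intro x hx
    have h := hD 0 (by norm_num) x hx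
    rw [iteratedDerivWithin_zero] at h
    rw [← hW1eq x (Ioo_subset_Icc_self hx)]
    exact h
  have hDW1 : ∀ x ∈ Ioo (0:ℝ) 1, HasDerivAt W1 (W2 x) x := by
    intro x hx
    have h := hD 1 (by norm_num) x hx
    apply h.congr_of_eventuallyEq
    exact Filter.eventually_of_mem (Icc_mem_nhds hx.1 hx.2)
      (fun y hy => (hW1eq y hy).symm)
  have hDW2 : ∀ x ∈ Ioo (0:ℝ) 1, HasDerivAt W2 (W3 x) x :=
    fun x hx => hD 2 (by norm_num) x hx
  have hDW3 : ∀ x ∈ Ioo (0:ℝ) 1, HasDerivAt W3 (gw x) x :=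
    fun x hx => hD 3 (by norm_num) x hx
  -- continuous extension of gw
  set gt : ℝ → ℝ := fun x => gw ((projIcc (0:ℝ) 1 h01 x : Icc (0:ℝ) 1) : ℝ) with gt_def
  have hgtc : Continuous gt :=
    hgwc.comp_continuous (continuous_subtype_val.comp continuous_projIcc)
      (fun x => (projIcc (0:ℝ) 1 h01 x).2)
  have hgt_eq : ∀ x ∈ Icc (0:ℝ) 1, gt x = gw x := by
    intro x hx
    rw [gt_def]; simp only [projIcc_of_mem h01 hx]
  -- DM membership of the data of w
  have hwZ : ∀ x ∈ Icc (0:ℝ) 1,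
      |∫ t in (0:ℝ)..1, k x t * w t| ≤ (5/384) * M2 * M := by
    intro x hx
    set wbar : ℝ → ℝ := fun t => w ((projIcc (0:ℝ) 1 h01 t : Icc (0:ℝ) 1) : ℝ) with wbar_def
    have hwbarc : Continuous wbar :=
      (hw_cd.continuousOn).comp_continuous
        (continuous_subtype_val.comp continuous_projIcc)
        (fun t => (projIcc (0:ℝ) 1 h01 t).2)
    have hwbar_eq : ∀ t ∈ Icc (0:ℝ) 1, wbar t = w t := by
      intro t ht
      rw [wbar_def]; simp only [projIcc_of_mem h01 ht]
    have hcongr : (∫ t in (0:ℝ)..1, k x t * w t) = ∫ t in (0:ℝ)..1, kk x t * wbar t := by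
      apply intervalIntegral.integral_congr
      intro t ht
      rw [uIcc_of_le h01] at ht
      show k x t * w t = kk x t * wbar t
      rw [hkk_eq x hx t ht, hwbar_eq t ht]
    rw [hcongr]
    have := hZgen wbar ((5/384)*M) hwbarc (by positivity)
      (fun t ht => by rw [hwbar_eq t ht]; exact (hw_bd t ht).1) x hx
    calc |∫ t in (0:ℝ)..1, kk x t * wbar t| ≤ M2 * ((5/384)*M) := this
      _ = (5/384) * M2 * M := by ring
  have hwmem : ∀ x ∈ Icc (0:ℝ) 1,
      (x, w x, W1 x, ∫ t in (0:ℝ)..1, k x t * w t) ∈ DM M M2 := by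
    intro x hx
    exact ⟨hx, (hw_bd x hx).1, (hw_bd x hx).2, hwZ x hx⟩
  have hgwb : ∀ x ∈ Icc (0:ℝ) 1, |gw x| ≤ M := by
    apply le_on_Icc_of_le_on_Ioo hgwc.abs
    intro x hx
    rw [hw_ode x hx]
    exact hfb _ _ _ _ (hwmem x (Ioo_subset_Icc_self hx))
  -- Claim 1 : w agrees with Gop (Gop gt) on [0,1]
  have hGc : Continuous (Gop gt) := continuous_Gop hgtc
  have hGGc : Continuous (Gop (Gop gt)) := continuous_Gop hGc
  have hG'c : Continuous (Gop' gt) := continuous_Gop' hgtc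
  have hGG'c : Continuous (Gop' (Gop gt)) := continuous_Gop' hGc
  -- D3 is constant
  have hc3 : ∀ x ∈ Icc (0:ℝ) 1, W3 x - Gop' gt x = W3 0 - Gop' gt 0 := by
    apply const_of_deriv_zero (φ' := fun x => gw x - gt x)
      (hW3c.sub hG'c.continuousOn)
    · intro x hx
      exact (hDW3 x hx).sub (hasDerivAt_Gop' hgtc x)
    · intro x hx
      rw [hgt_eq x (Ioo_subset_Icc_self hx)]; ring
  -- D2 is linear, vanishing at both ends, hence zero
  have hc2lin : ∀ x ∈ Icc (0:ℝ) 1,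
      W2 x - Gop gt x = (W2 0 - Gop gt 0) + (W3 0 - Gop' gt 0) * x := by
    intro x hx
    have hconst := const_of_deriv_zero
      (φ := fun y => (W2 y - Gop gt y) - (W3 0 - Gop' gt 0) * y)
      (φ' := fun y => (W3 y - Gop' gt y) - (W3 0 - Gop' gt 0))
      (((hW2c.sub hGc.continuousOn)).sub (by fun_prop))
      (fun y hy => ((hDW2 y hy).sub (hasDerivAt_Gop hgtc y)).sub
        (by simpa using (hasDerivAt_id y).const_mul (W3 0 - Gop' gt 0)))
      (fun y hy => by
        show (W3 y - Gop' gt y) - (W3 0 - Gop' gt 0) = 0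
        rw [hc3 y (Ioo_subset_Icc_self hy)]; ring)
      x hx
    linarith [hconst]
  have hW20 : W2 0 = 0 := hw20
  have hW21 : W2 1 = 0 := hw21
  have hD30 : W3 0 - Gop' gt 0 = 0 := by
    have h1 := hc2lin 1 ⟨h01, le_rfl⟩
    rw [hW21, Gop_one hgtc, hW20, Gop_zero] at h1
    simpa using h1.symm
  have hc2 : ∀ x ∈ Icc (0:ℝ) 1, W2 x - Gop gt x = 0 := by
    intro x hx
    rw [hc2lin x hx, hD30, hW20, Gop_zero]; ring
  -- D1 constant
  have hc1 : ∀ x ∈ Icc (0:ℝ) 1,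
      W1 x - Gop' (Gop gt) x = W1 0 - Gop' (Gop gt) 0 := by
    apply const_of_deriv_zero (φ' := fun x => W2 x - Gop gt x)
      (hW1c.sub hGG'c.continuousOn)
    · intro x hx
      exact (hDW1 x hx).sub (hasDerivAt_Gop' hGc x)
    · intro x hx
      exact hc2 x (Ioo_subset_Icc_self hx)
  -- D0 linear and vanishing at both ends
  have hc0lin : ∀ x ∈ Icc (0:ℝ) 1,
      w x - Gop (Gop gt) x = (w 0 - Gop (Gop gt) 0) + (W1 0 - Gop' (Gop gt) 0) * x := by
    intro x hx
    have hconst := const_of_deriv_zero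
      (φ := fun y => (w y - Gop (Gop gt) y) - (W1 0 - Gop' (Gop gt) 0) * y)
      (φ' := fun y => (W1 y - Gop' (Gop gt) y) - (W1 0 - Gop' (Gop gt) 0))
      ((hw_cd.continuousOn.sub hGGc.continuousOn).sub (by fun_prop))
      (fun y hy => ((hDw y hy).sub (hasDerivAt_Gop hGc y)).sub
        (by simpa using (hasDerivAt_id y).const_mul (W1 0 - Gop' (Gop gt) 0)))
      (fun y hy => by
        show (W1 y - Gop' (Gop gt) y) - (W1 0 - Gop' (Gop gt) 0) = 0
        rw [hc1 y (Ioo_subset_Icc_self hy)]; ring)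
      x hx
    linarith [hconst]
  have hD10 : W1 0 - Gop' (Gop gt) 0 = 0 := by
    have h1 := hc0lin 1 ⟨h01, le_rfl⟩
    rw [hw1, Gop_one hGc, hw0, Gop_zero] at h1
    simpa using h1.symm
  have hwU : ∀ x ∈ Icc (0:ℝ) 1, w x = Gop (Gop gt) x := by
    intro x hx
    have := hc0lin x hx
    rw [hD10, hw0, Gop_zero] at this
    linarith
  have hwV : ∀ x ∈ Icc (0:ℝ) 1, W1 x = Gop' (Gop gt) x := by
    intro x hx
    rw [W1_def]
    exact derivWithin_eq_of_eqOn hwU (hasDerivAt_Gop hGc) hx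
  -- the element of the ball induced by w
  set wElt : {h : C(Icc (0:ℝ) 1, ℝ) // ‖h‖ ≤ M} :=
    ⟨⟨fun x : Icc (0:ℝ) 1 => gw ↑x, hgwc.restrict⟩, by
      rw [ContinuousMap.norm_le _ hM.le]
      intro x
      exact hgwb ↑x x.2⟩ with wElt_def
  have hextw : ext wElt = gt := by
    funext y
    rfl
  have hTw : T wElt = wElt := by
    apply Subtype.ext
    apply ContinuousMap.ext
    intro x
    have key : EqOn (fun y : ℝ => F y (U wElt y) (V wElt y) (Z wElt y)) gw
        (Icc (0:ℝ) 1) := by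
      apply eqOn_Icc_of_eqOn_Ioo _ hgwc
      · intro y hy
        have hyI : y ∈ Icc (0:ℝ) 1 := Ioo_subset_Icc_self hy
        have hUw : ∀ t ∈ Icc (0:ℝ) 1, U wElt t = w t := by
          intro t ht
          rw [U_def]
          show Gop (Gop (ext wElt)) t = w t
          rw [hextw]
          exact (hwU t ht).symm
        have hVw : V wElt y = W1 y := by
          rw [V_def]
          show Gop' (Gop (ext wElt)) y = W1 y
          rw [hextw]
          exact (hwV y hyI).symm
        have hZw : Z wElt y = ∫ t in (0:ℝ)..1, k y t * w t := by
          rw [Z_def]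
          apply intervalIntegral.integral_congr
          intro t ht
          rw [uIcc_of_le h01] at ht
          show kk y t * U wElt t = k y t * w t
          rw [hkk_eq y hyI t ht, hUw t ht]
        show F y (U wElt y) (V wElt y) (Z wElt y) = gw y
        rw [hUw y hyI, hVw, hZw, hFeq _ _ _ _ (hwmem y hyI), ← hw_ode y hy]
      · exact (hFc.comp (continuous_id.prodMk
          ((hUc wElt).prodMk ((hVc wElt).prodMk (hZc wElt))))).continuousOn
    have := key x.2
    rw [T_def]
    exact this
  have hwS : wElt = S := hcontr.fixedPoint_unique hTw
  intro x hx
  show w x = U S x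
  rw [← hwS]
  have : U wElt x = Gop (Gop gt) x := by
    rw [U_def]
    show Gop (Gop (ext wElt)) x = Gop (Gop gt) x
    rw [hextw]
  rw [this]
  exact hwU x hx
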